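/- For any number of classes C ≥ 2, any class index c, and any probability vector p on the C classes, setting Δ = 1 − p_c, equality LDI(p, c) = Δ·√(C / (2(C − 1))) holds if and only if p_{c'} = Δ/(C − 1) for every class c' ≠ c; that is, the lower bound is attained exactly when the heterophily mass is spread uniformly over all C − 1 other classes. -/
import Mathlib


open Finset

/-- The label difference index of a distribution `p` on `C` classes with respect to
class `c`: `LDI(p, c) = (1/√2)·√((1 − p_c)² + Σ_{c'≠c} p_{c'}²)`. -/
noncomputable def LDI {C : ℕ} (p : Fin C → ℝ) (c : Fin C) : ℝ :=
  (1 / Real.sqrt 2) * Real.sqrt ((1 - p c) ^ 2 + ∑ j ∈ univ.filter (· ≠ c), (p j) ^ 2)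

/-- For any `C ≥ 2`, class `c` and probability vector `p`, with `Δ = 1 − p_c`,
equality `LDI(p, c) = Δ·√(C / (2(C − 1)))` holds iff the heterophily mass is spread
uniformly over all `C − 1` other classes, i.e. `p_{c'} = Δ/(C − 1)` for all `c' ≠ c`. -/
theorem ldi_eq_lower_bound_iff (C : ℕ) (hC : 2 ≤ C) (c : Fin C) (p : Fin C → ℝ)
    (hp0 : ∀ j, 0 ≤ p j) (hp1 : ∑ j, p j = 1) :
    LDI p c = (1 - p c) * Real.sqrt ((C : ℝ) / (2 * ((C : ℝ) - 1))) ↔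
      ∀ c' : Fin C, c' ≠ c → p c' = (1 - p c) / ((C : ℝ) - 1) := by
  have hCcast : (2:ℝ) ≤ (C:ℝ) := by exact_mod_cast hC
  set n : ℝ := (C:ℝ) - 1 with hn_def
  have hn : (0:ℝ) < n := by rw [hn_def]; linarith
  have hn' : n ≠ 0 := ne_of_gt hn
  set S := univ.filter (· ≠ c) with hS_def
  have hS : S = univ.erase c := Finset.filter_ne' univ c
  set Δ : ℝ := 1 - p c with hΔdef
  have hsum : ∑ j ∈ S, p j = Δ := by
    have h := Finset.add_sum_erase univ p (Finset.mem_univ c)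
    rw [hp1] at h
    rw [hS, hΔdef]
    linarith
  have hΔ0 : 0 ≤ Δ := by
    rw [← hsum]
    exact Finset.sum_nonneg fun j _ => hp0 j
  have hcard : ((S.card : ℝ)) = n := by
    rw [hS, Finset.card_erase_of_mem (mem_univ c)]
    rw [Finset.card_fin, Nat.cast_sub (by omega : 1 ≤ C), hn_def]
    norm_num
  set Q : ℝ := ∑ j ∈ S, (p j) ^ 2 with hQdef
  have hQ0 : 0 ≤ Q := Finset.sum_nonneg fun j _ => sq_nonneg _
  -- key algebraic identity
  have hkey : ∑ j ∈ S, (p j - Δ / n) ^ 2 = Q - Δ ^ 2 / n := by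
    have expand : ∀ x : ℝ, (x - Δ/n)^2 = x^2 - 2*(Δ/n)*x + (Δ/n)^2 := fun x => by ring
    calc ∑ j ∈ S, (p j - Δ/n)^2
        = ∑ j ∈ S, (p j^2 - 2*(Δ/n)*p j + (Δ/n)^2) := by simp_rw [expand]
      _ = (∑ j ∈ S, p j^2) - 2*(Δ/n)*(∑ j ∈ S, p j) + (S.card : ℝ)*(Δ/n)^2 := by
          rw [Finset.sum_add_distrib, Finset.sum_sub_distrib, Finset.mul_sum,
            Finset.sum_const, nsmul_eq_mul]
      _ = Q - Δ ^ 2 / n := by rw [hsum, hcard, ← hQdef]; field_simp; ring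
  -- rewrite equality of LDI as a polynomial equality
  have hsqrt_eq : LDI p c = Δ * Real.sqrt ((C : ℝ) / (2 * n)) ↔ Q = Δ ^ 2 / n := by
    have hx : (0:ℝ) ≤ Δ ^ 2 + Q := by positivity
    have hL : LDI p c = Real.sqrt ((Δ ^ 2 + Q) / 2) := by
      rw [LDI, ← hS_def, ← hΔdef, ← hQdef, Real.sqrt_div hx]
      ring
    have hR : Δ * Real.sqrt ((C : ℝ) / (2 * n)) =
        Real.sqrt (Δ ^ 2 * ((C : ℝ) / (2 * n))) := by
      rw [Real.sqrt_mul (sq_nonneg Δ), Real.sqrt_sq hΔ0]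
    rw [hL, hR, Real.sqrt_inj (by positivity) (by positivity)]
    have hCn : (C : ℝ) = n + 1 := by rw [hn_def]; ring
    rw [hCn]
    constructor
    · intro h
      have h2 : (Δ ^ 2 + Q) * (2 * n) = Δ ^ 2 * (n + 1) * 2 := by
        field_simp at h
        linarith
      have : Q * n = Δ ^ 2 := by nlinarith
      field_simp
      linarith
    · intro h
      rw [h]
      field_simp
  rw [hsqrt_eq]
  constructor
  · intro hQeq c' hc'
    have hz : ∑ j ∈ S, (p j - Δ / n) ^ 2 = 0 := by rw [hkey, hQeq]; ring
    have := (Finset.sum_eq_zero_iff_of_nonneg (fun j _ => sq_nonneg (p j - Δ / n))).mp hz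
      c' (by simp [hS_def, hc'])
    have := pow_eq_zero_iff (n := 2) (by norm_num) |>.mp this
    linarith [sub_eq_zero.mp this]
  · intro h
    have : ∀ j ∈ S, p j ^ 2 = (Δ / n) ^ 2 := by
      intro j hj
      rw [h j (by simpa [hS_def] using hj)]
    rw [hQdef, Finset.sum_congr rfl this, Finset.sum_const, nsmul_eq_mul, hcard]
    field_simp
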